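/- arXiv:2505.13250 — 2 statements merged into one kernel-verified Lean document; each statement's English description precedes it below -/
import Mathlib

section
/- Let t_r > 0, τ ∈ ℝ, η > 0, S > 0, α > 0, N_r > 0 be real numbers, b ≥ 0, and set B = b · t_r. Let g : ℝ → ℝ be a nonnegative measurable function with ∫_0^{t_r} g(t − τ) dt = 1, and define the pulse s(t) = S · g(t). Then ∫_0^{t_r} s(t − τ)²/(η α s(t − τ) + b) dt is finite and strictly positive, and [ N_r η² ∫_0^{t_r} s(t − τ)² / (η α s(t − τ) + b) dt ]^{−1} ≤ (η S α + B) / (N_r η² S²). (This is the inequality of Theorem 2: the Cramér–Rao lower bound of the reflectivity estimator that uses timestamps and depth is uniformly lower than that of the estimator based on photon counts alone.) -/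
/-!
Write `f(t) = S g(t − τ)` and `h = η α f + b`, so that `∫₀^{t_r} f = S` and
`∫₀^{t_r} h = η α S + B`. The Cauchy–Schwarz inequality `(∫ f)² ≤ (∫ f²/h) (∫ h)`, i.e.
`S² ≤ (∫ f²/h) (η α S + B)`, is exactly the claim; integrability of `f²/h` comes from the
pointwise bound `f²/h ≤ f / (η α)`.
-/

open MeasureTheory

theorem two_mul_mul_le_sq_mul_sq_div_add {f h : ℝ} (t : ℝ) (hh : 0 ≤ h) (hfh : h = 0 → f = 0) :
    2 * t * f ≤ t ^ 2 * (f ^ 2 / h) + h := by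
  rcases hh.eq_or_lt with rfl | hpos
  · simp [hfh rfl]
  · have key : t ^ 2 * (f ^ 2 / h) + h - 2 * t * f = (t * f - h) ^ 2 / h := by
      field_simp
      ring
    have : 0 ≤ (t * f - h) ^ 2 / h := by positivity
    linarith

theorem sq_integral_le_integral_sq_div_mul_integral {X : Type*} [MeasurableSpace X]
    {μ : Measure X} {f h : X → ℝ} (hh : ∀ᵐ x ∂μ, 0 ≤ h x) (hfh : ∀ᵐ x ∂μ, h x = 0 → f x = 0)
    (hf : Integrable f μ) (hq : Integrable (fun x => f x ^ 2 / h x) μ) (hhi : Integrable h μ) :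
    (∫ x, f x ∂μ) ^ 2 ≤ (∫ x, f x ^ 2 / h x ∂μ) * ∫ x, h x ∂μ := by
  -- `t ↦ ∫ (t f - h)² / h` is a nonnegative quadratic, so its discriminant is `≤ 0`.
  have quadratic_nonneg : ∀ t : ℝ, 0 ≤ (∫ x, f x ^ 2 / h x ∂μ) * (t * t)
      + (-2 * ∫ x, f x ∂μ) * t + ∫ x, h x ∂μ := by
    intro t
    have hint : ∫ x, 2 * t * f x ∂μ ≤ ∫ x, t ^ 2 * (f x ^ 2 / h x) + h x ∂μ :=
      integral_mono_ae (hf.const_mul _) ((hq.const_mul _).add hhi) <| by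
        filter_upwards [hh, hfh] with x hx hfx
        exact two_mul_mul_le_sq_mul_sq_div_add t hx hfx
    rw [integral_const_mul, integral_add (hq.const_mul _) hhi, integral_const_mul] at hint
    nlinarith
  have := discrim_le_zero quadratic_nonneg
  rw [discrim] at this
  linarith

theorem sq_div_mul_add_le_div {a b c : ℝ} (ha : 0 ≤ a) (hb : 0 ≤ b) (hc : 0 < c) :
    a ^ 2 / (c * a + b) ≤ a / c := by
  rcases ha.eq_or_lt with rfl | hpos
  · simp
  · calc a ^ 2 / (c * a + b) ≤ a ^ 2 / (c * a) := by gcongr; linarith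
      _ = a / c := by field_simp

section SqDivMulAdd

variable {X : Type*} [MeasurableSpace X] {μ : Measure X} [IsFiniteMeasure μ] {f : X → ℝ} {b c : ℝ}

theorem integrable_sq_div_mul_add (hf : Integrable f μ) (hfnn : ∀ᵐ x ∂μ, 0 ≤ f x) (hb : 0 ≤ b)
    (hc : 0 < c) : Integrable (fun x => f x ^ 2 / (c * f x + b)) μ := by
  have hden : Integrable (fun x => c * f x + b) μ := (hf.const_mul c).add (integrable_const b)
  refine (hf.div_const c).mono'
    ((hf.aemeasurable.pow_const 2).div hden.aemeasurable).aestronglyMeasurable ?_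
  filter_upwards [hfnn] with x hx
  rw [Real.norm_of_nonneg (by positivity)]
  exact sq_div_mul_add_le_div hx hb hc

theorem sq_integral_le_integral_sq_div_mul_add_mul (hf : Integrable f μ)
    (hfnn : ∀ᵐ x ∂μ, 0 ≤ f x) (hb : 0 ≤ b) (hc : 0 < c) :
    (∫ x, f x ∂μ) ^ 2 ≤ (∫ x, f x ^ 2 / (c * f x + b) ∂μ) * ∫ x, c * f x + b ∂μ := by
  refine sq_integral_le_integral_sq_div_mul_integral ?_ ?_ hf
    (integrable_sq_div_mul_add hf hfnn hb hc) ((hf.const_mul c).add (integrable_const b))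
  · filter_upwards [hfnn] with x hx
    positivity
  · filter_upwards [hfnn] with x hx hzero
    have hcf : c * f x = 0 := by linarith [mul_nonneg hc.le hx]
    exact (mul_eq_zero.1 hcf).resolve_left hc.ne'

end SqDivMulAdd

theorem crlb_comparison_general
    (tr τ η S α Nr b : ℝ)
    (htr : 0 < tr) (hη : 0 < η) (hS : 0 < S) (hα : 0 < α) (hNr : 0 < Nr) (hb : 0 ≤ b)
    (g : ℝ → ℝ) (hgnn : ∀ u, 0 ≤ g u)
    (hgint : IntervalIntegrable (fun u => g (u - τ)) volume 0 tr)
    (hg1 : ∫ u in (0:ℝ)..tr, g (u - τ) = 1) :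
    IntervalIntegrable
      (fun u => (S * g (u - τ)) ^ 2 / (η * α * (S * g (u - τ)) + b)) volume 0 tr
    ∧ 0 < ∫ u in (0:ℝ)..tr, (S * g (u - τ)) ^ 2 / (η * α * (S * g (u - τ)) + b)
    ∧ (Nr * η ^ 2 * ∫ u in (0:ℝ)..tr,
          (S * g (u - τ)) ^ 2 / (η * α * (S * g (u - τ)) + b))⁻¹
        ≤ (η * S * α + b * tr) / (Nr * η ^ 2 * S ^ 2) := by
  set μ := volume.restrict (Set.Ioc 0 tr)
  set f : ℝ → ℝ := fun u => S * g (u - τ)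
  have hfnn : ∀ᵐ u ∂μ, 0 ≤ f u := ae_of_all _ fun u => mul_nonneg hS.le (hgnn _)
  have hf : Integrable f μ := (hgint.const_mul S).1
  have hηα : 0 < η * α := by positivity
  have hfS : ∫ u, f u ∂μ = S := by
    rw [← intervalIntegral.integral_of_le htr.le, intervalIntegral.integral_const_mul, hg1, mul_one]
  have hhJ : ∫ u, η * α * f u + b ∂μ = η * S * α + b * tr := by
    rw [integral_add (hf.const_mul _) (integrable_const b), integral_const_mul, hfS]
    simp [μ, htr.le]
    ring
  have hJ : 0 < η * S * α + b * tr := by positivity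
  have hI : S ^ 2 / (η * S * α + b * tr) ≤ ∫ u in (0:ℝ)..tr, f u ^ 2 / (η * α * f u + b) := by
    have hCS := sq_integral_le_integral_sq_div_mul_add_mul hf hfnn hb hηα
    rw [hfS, hhJ] at hCS
    rwa [intervalIntegral.integral_of_le htr.le, div_le_iff₀ hJ]
  refine ⟨(intervalIntegrable_iff_integrableOn_Ioc_of_le htr.le).2
    (integrable_sq_div_mul_add hf hfnn hb hηα), lt_of_lt_of_le (by positivity) hI, ?_⟩
  calc (Nr * η ^ 2 * ∫ u in (0:ℝ)..tr, f u ^ 2 / (η * α * f u + b))⁻¹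
      ≤ (Nr * η ^ 2 * (S ^ 2 / (η * S * α + b * tr)))⁻¹ := by gcongr
    _ = (η * S * α + b * tr) / (Nr * η ^ 2 * S ^ 2) := by field_simp

/-- Theorem 2 (CRLB comparison): with pulse `s(t) = S g(t)`, normalized shape `g`
fully supported on `[0, t_r]` (so `∫₀^{t_r} g(t − τ) dt = 1`), background rate
`b ≥ 0` and noise energy `B = b t_r`, the integral
`∫₀^{t_r} s(t − τ)²/(η α s(t − τ) + b) dt` is finite and strictly positive, and
`[N_r η² ∫₀^{t_r} s(t − τ)²/(η α s(t − τ) + b) dt]⁻¹ ≤ (η S α + B)/(N_r η² S²)`. -/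
theorem crlb_comparison
    (tr τ η S α Nr b : ℝ)
    (htr : 0 < tr) (hη : 0 < η) (hS : 0 < S) (hα : 0 < α) (hNr : 0 < Nr) (hb : 0 ≤ b)
    (g : ℝ → ℝ) (hgmeas : Measurable g) (hgnn : ∀ u, 0 ≤ g u)
    (hgint : IntervalIntegrable (fun u => g (u - τ)) volume 0 tr)
    (hg1 : ∫ u in (0:ℝ)..tr, g (u - τ) = 1) :
    IntervalIntegrable
      (fun u => (S * g (u - τ)) ^ 2 / (η * α * (S * g (u - τ)) + b)) volume 0 tr
    ∧ 0 < ∫ u in (0:ℝ)..tr, (S * g (u - τ)) ^ 2 / (η * α * (S * g (u - τ)) + b)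
    ∧ (Nr * η ^ 2 * ∫ u in (0:ℝ)..tr,
          (S * g (u - τ)) ^ 2 / (η * α * (S * g (u - τ)) + b))⁻¹
        ≤ (η * S * α + b * tr) / (Nr * η ^ 2 * S ^ 2) :=
  crlb_comparison_general tr τ η S α Nr b htr hη hS hα hNr hb g hgnn hgint hg1
end

section
/- Let t_r > 0, a > 0, b ≥ 0 be real numbers and g : [0, t_r] → ℝ a continuous, strictly positive, non-constant function with ∫_0^{t_r} g(t) dt = 1. Then equality holds in the inequality 1 ≤ ( ∫_0^{t_r} g(t)² / (a g(t) + b) dt ) · ( a + b t_r ) if and only if b = 0. (This is the equality case of Theorem 2: the two Cramér–Rao lower bounds coincide exactly when the background noise vanishes.) -/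
open MeasureTheory

/-! This is the equality case of a weighted Cauchy–Schwarz inequality. For `w > 0` and
`c = ∫ f / ∫ w`, completing the square in `f² / w = 2 c f - c² w + (f - c w)² / w` gives
`(∫ f² / w) (∫ w) = (∫ f)² + (∫ w) ∫ (f - c w)² / w`, and the last integrand is continuous and
nonnegative, so equality holds iff `f = c w`. With `f = g` and `w = a g + b` this reads
`g = (a g + b) / (a + b t_r)` on `[0, t_r]`, which holds for `b = 0`; for `b ≠ 0` the affine map
`x ↦ (a x + b) / (a + b t_r)` has at most one fixed point, so `g` would be constant. -/

theorem eq_of_eq_mul_add_of_eq_mul_add {K : Type*} [Field K] {a b c x y : K} (hcb : c * b ≠ 0)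
    (hx : x = c * (a * x + b)) (hy : y = c * (a * y + b)) : x = y := by
  have hxy : (x - y) * (1 - c * a) = 0 := by linear_combination hx - hy
  have hca : 1 - c * a ≠ 0 := by
    intro h
    exact hcb (by linear_combination x * h - hx)
  exact sub_eq_zero.1 ((mul_eq_zero.1 hxy).resolve_right hca)

theorem intervalIntegral_sq_div_eq {μ : Measure ℝ} {f w : ℝ → ℝ} {α β : ℝ} (c : ℝ)
    (hf : IntervalIntegrable f μ α β) (hw : IntervalIntegrable w μ α β)
    (hr : IntervalIntegrable (fun x => (f x - c * w x) ^ 2 / w x) μ α β)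
    (hw0 : ∀ x ∈ Set.uIcc α β, w x ≠ 0) :
    ∫ x in α..β, f x ^ 2 / w x ∂μ = 2 * c * (∫ x in α..β, f x ∂μ) - c ^ 2 * (∫ x in α..β, w x ∂μ)
      + ∫ x in α..β, (f x - c * w x) ^ 2 / w x ∂μ := by
  have hsq : Set.EqOn (fun x => f x ^ 2 / w x)
      (fun x => (2 * c * f x - c ^ 2 * w x) + (f x - c * w x) ^ 2 / w x) (Set.uIcc α β) := by
    intro x hx
    field_simp [hw0 x hx]
    ring
  rw [intervalIntegral.integral_congr hsq,
    intervalIntegral.integral_add ((hf.const_mul _).sub (hw.const_mul _)) hr,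
    intervalIntegral.integral_sub (hf.const_mul _) (hw.const_mul _),
    intervalIntegral.integral_const_mul, intervalIntegral.integral_const_mul]

theorem intervalIntegral_eq_zero_iff_of_continuousOn_of_nonneg {f : ℝ → ℝ} {α β : ℝ}
    (hαβ : α < β) (hf : ContinuousOn f (Set.Icc α β)) (hf0 : ∀ x ∈ Set.Icc α β, 0 ≤ f x) :
    ∫ x in α..β, f x = 0 ↔ ∀ x ∈ Set.Icc α β, f x = 0 := by
  refine ⟨fun h => ?_, fun h => ?_⟩
  · by_contra! hne
    obtain ⟨x, hx, hfx⟩ := hne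
    have := intervalIntegral.integral_pos hαβ hf (fun y hy => hf0 y (Set.Ioc_subset_Icc_self hy))
      ⟨x, hx, (hf0 x hx).lt_of_ne' hfx⟩
    exact this.ne' h
  · have hzero : Set.EqOn f 0 (Set.uIcc α β) := by rwa [Set.uIcc_of_le hαβ.le]
    rw [intervalIntegral.integral_congr hzero, Pi.zero_def, intervalIntegral.integral_zero]

theorem intervalIntegral_sq_div_mul_eq_sq_iff {f w : ℝ → ℝ} {α β : ℝ} (hαβ : α < β)
    (hf : ContinuousOn f (Set.Icc α β)) (hw : ContinuousOn w (Set.Icc α β))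
    (hw0 : ∀ x ∈ Set.Icc α β, 0 < w x) :
    (∫ x in α..β, f x ^ 2 / w x) * (∫ x in α..β, w x) = (∫ x in α..β, f x) ^ 2 ↔
      ∀ x ∈ Set.Icc α β, f x = (∫ x in α..β, f x) / (∫ x in α..β, w x) * w x := by
  set F := ∫ x in α..β, f x
  set W := ∫ x in α..β, w x
  have hα : α ∈ Set.Icc α β := Set.left_mem_Icc.2 hαβ.le
  have hW : 0 < W := intervalIntegral.integral_pos hαβ hw
    (fun x hx => (hw0 x (Set.Ioc_subset_Icc_self hx)).le) ⟨α, hα, hw0 α hα⟩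
  have hrc : ContinuousOn (fun x => (f x - F / W * w x) ^ 2 / w x) (Set.Icc α β) :=
    (by fun_prop : ContinuousOn _ _).div hw fun x hx => (hw0 x hx).ne'
  have hsplit : (∫ x in α..β, f x ^ 2 / w x) * W
      = F ^ 2 + W * ∫ x in α..β, (f x - F / W * w x) ^ 2 / w x := by
    rw [intervalIntegral_sq_div_eq (F / W) (hf.intervalIntegrable_of_Icc hαβ.le)
      (hw.intervalIntegrable_of_Icc hαβ.le) (hrc.intervalIntegrable_of_Icc hαβ.le)
      (Set.uIcc_of_le hαβ.le ▸ fun x hx => (hw0 x hx).ne')]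
    generalize ∫ x in α..β, (f x - F / W * w x) ^ 2 / w x = R
    field_simp
    ring
  rw [hsplit, add_eq_left, mul_eq_zero, or_iff_right hW.ne',
    intervalIntegral_eq_zero_iff_of_continuousOn_of_nonneg hαβ hrc
      fun x hx => div_nonneg (sq_nonneg _) (hw0 x hx).le]
  refine forall₂_congr fun x hx => ?_
  rw [div_eq_zero_iff, or_iff_left (hw0 x hx).ne', pow_eq_zero_iff two_ne_zero, sub_eq_zero]

/-- Equality case of Theorem 2: for a continuous, strictly positive, non-constant
`g` on `[0, t_r]` with `∫₀^{t_r} g = 1`, equality holds in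
`1 ≤ (∫₀^{t_r} g²/(a g + b)) · (a + b t_r)` if and only if `b = 0`. -/
theorem crlb_equality_iff_no_noise
    (tr a b : ℝ) (htr : 0 < tr) (ha : 0 < a) (hb : 0 ≤ b)
    (g : ℝ → ℝ) (hgc : ContinuousOn g (Set.Icc (0:ℝ) tr))
    (hgpos : ∀ u ∈ Set.Icc (0:ℝ) tr, 0 < g u)
    (hgnc : ∃ u ∈ Set.Icc (0:ℝ) tr, ∃ v ∈ Set.Icc (0:ℝ) tr, g u ≠ g v)
    (hg1 : ∫ u in (0:ℝ)..tr, g u = 1) :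
    (∫ u in (0:ℝ)..tr, g u ^ 2 / (a * g u + b)) * (a + b * tr) = 1 ↔ b = 0 := by
  have hwpos : ∀ u ∈ Set.Icc (0:ℝ) tr, 0 < a * g u + b := fun u hu => by
    have := hgpos u hu; positivity
  have hintw : ∫ u in (0:ℝ)..tr, (a * g u + b) = a + b * tr := by
    rw [intervalIntegral.integral_add ((hgc.intervalIntegrable_of_Icc htr.le).const_mul a)
      intervalIntegrable_const, intervalIntegral.integral_const_mul, hg1,
      intervalIntegral.integral_const, sub_zero, smul_eq_mul, mul_one, mul_comm]
  have hequal := intervalIntegral_sq_div_mul_eq_sq_iff htr hgc (by fun_prop) hwpos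
  rw [hintw, hg1, one_pow, one_div] at hequal
  rw [hequal]
  constructor
  · intro hfix
    by_contra hb0
    obtain ⟨u, hu, v, hv, huv⟩ := hgnc
    have hW : 0 < a + b * tr := by positivity
    exact huv (eq_of_eq_mul_add_of_eq_mul_add (mul_ne_zero (inv_ne_zero hW.ne') hb0)
      (hfix u hu) (hfix v hv))
  · rintro rfl u -
    rw [zero_mul, add_zero, add_zero, inv_mul_cancel_left₀ ha.ne']
end
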